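/- arXiv:1511.06882 — 5 statements merged into one kernel-verified Lean document; each statement's English description precedes it below -/
import Mathlib

section
/- Let n ≥ 1 and h = (h_1,…,h_n) ∈ ℤ^n with h_i < h_{i+1} for all 1 ≤ i ≤ n−1. Define a partial order on ℤ^n by (x_1,…,x_n) ≤ (y_1,…,y_n) iff Σ_{j≤i} x_j ≤ Σ_{j≤i} y_j for all 1 ≤ i ≤ n, and let S_n act by (w(h))_i = h_{w^{-1}(i)}. Let I ⊆ {1,…,n−1} and let W_I ⊆ S_n be the subgroup generated by the transpositions (i,i+1) for i ∈ I. If w, w' ∈ S_n satisfy w(h) ≥ w'(h) and w ∈ W_I, then w' ∈ W_I. -/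
/-!
`W_I` is exactly the group of permutations mapping every initial segment `{0, …, i}` with
`i ∉ I` onto itself: such a permutation moves each point only inside its block, and the adjacent
transpositions of a block connect it, so it lies in the group generated by transpositions with
these orbits. For `w ∈ W_I` the partial sum of `w(h)` up to such a cut is therefore the sum of the
smallest entries of `h`, which, `h` being strictly increasing, is the strict minimum over all index
sets of that size. So `w'(h) ≤ w(h)` forces `w'⁻¹` to stabilise these segments as well.
-/

open Finset

/-- Partial sum of the first `a` coordinates (zero-indexed: indices `< a`). -/
def psum {n : ℕ} (x : Fin n → ℤ) (a : ℕ) : ℤ :=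
  ∑ j ∈ Finset.univ.filter (fun j : Fin n => (j : ℕ) < a), x j

/-- The parabolic subgroup `W_I ⊆ S_n` generated by the transpositions `(i, i+1)`
for `i ∈ I` (zero-indexed positions). -/
def WI (n : ℕ) (I : Set ℕ) : Subgroup (Equiv.Perm (Fin n)) :=
  Subgroup.closure
    { σ | ∃ i ∈ I, ∃ h : i + 1 < n,
        σ = Equiv.swap (⟨i, Nat.lt_of_succ_lt h⟩ : Fin n) (⟨i + 1, h⟩ : Fin n) }

open Pointwise

namespace Finset

variable {ι M : Type*} [AddCommMonoid M] [LinearOrder M] [IsOrderedCancelAddMonoid M]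

theorem sum_lt_sum_of_card_eq_of_forall_lt {s t : Finset ι} {f : ι → M} (hcard : #s = #t)
    (hs : s.Nonempty) (hlt : ∀ i ∈ s, ∀ j ∈ t, f i < f j) :
    ∑ i ∈ s, f i < ∑ j ∈ t, f j := by
  obtain ⟨i₀, hi₀, hmax⟩ := s.exists_max_image f hs
  calc ∑ i ∈ s, f i ≤ #s • f i₀ := sum_le_card_nsmul s f _ hmax
    _ = ∑ _j ∈ t, f i₀ := by rw [sum_const, hcard]
    _ < ∑ j ∈ t, f j := sum_lt_sum_of_nonempty (card_pos.1 (hcard ▸ card_pos.2 hs))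
        fun j hj => hlt i₀ hi₀ j hj

theorem eq_of_sum_le_sum_of_isLowerSet [LinearOrder ι] {s t : Finset ι} {f : ι → M}
    (hf : StrictMono f) (ht : IsLowerSet (t : Set ι)) (hcard : #s = #t)
    (hsum : ∑ i ∈ s, f i ≤ ∑ i ∈ t, f i) : s = t := by
  classical
  by_contra hne
  have hts : (t \ s).Nonempty := by
    rw [nonempty_iff_ne_empty, Ne, sdiff_eq_empty_iff_subset]
    exact fun hsub => hne (eq_of_subset_of_card_le hsub hcard.le).symm
  have hlt : ∀ i ∈ t \ s, ∀ j ∈ s \ t, f i < f j := by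
    intro i hi j hj
    rw [mem_sdiff] at hi hj
    exact hf (lt_of_not_ge fun hji => hj.2 (ht hji hi.1))
  have := sum_lt_sum_of_card_eq_of_forall_lt (card_sdiff_comm hcard.symm) hts hlt
  exact (sum_sdiff_lt_sum_sdiff.1 this).not_ge hsum

end Finset

def initialSegment (n a : ℕ) : Finset (Fin n) := univ.filter fun j : Fin n => (j : ℕ) < a

theorem isLowerSet_initialSegment (n a : ℕ) : IsLowerSet (initialSegment n a : Set (Fin n)) := by
  intro i j hji hi
  simp only [initialSegment, coe_filter, mem_univ, true_and, Set.mem_ofPred_eq] at hi ⊢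
  exact lt_of_le_of_lt hji hi

theorem initialSegment_eq_univ {n a : ℕ} (h : n ≤ a) : initialSegment n a = univ :=
  filter_true_of_mem fun j _ => lt_of_lt_of_le j.isLt h

theorem mem_initialSegment {n a : ℕ} {j : Fin n} : j ∈ initialSegment n a ↔ (j : ℕ) < a := by
  simp [initialSegment]

theorem psum_eq_sum_inv_smul {n : ℕ} (h : Fin n → ℤ) (σ : Equiv.Perm (Fin n)) (a : ℕ) :
    psum (fun i => h (σ⁻¹ i)) a = ∑ j ∈ σ⁻¹ • initialSegment n a, h j := by
  rw [← image_smul, sum_image (MulAction.injective σ⁻¹).injOn]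
  rfl

theorem swap_smul_finset_eq_self {α : Type*} [DecidableEq α] {x y : α} {s : Finset α}
    (h : x ∈ s ↔ y ∈ s) : Equiv.swap x y • s = s := by
  ext z
  rw [← Equiv.swap_inv, mem_inv_smul_finset_iff, Equiv.Perm.smul_def, Equiv.swap_apply_def]
  split_ifs with hx hy
  · rw [hx]; exact h.symm
  · rw [hy]; exact h
  · rfl

/-- The permutations preserving each block of the partition of `Fin n` cut after the positions
`i ∉ I`. -/
def blockStabilizer (n : ℕ) (I : Set ℕ) : Subgroup (Equiv.Perm (Fin n)) :=
  ⨅ (i : ℕ) (_ : i ∉ I), MulAction.stabilizer (Equiv.Perm (Fin n)) (initialSegment n (i + 1))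

theorem mem_blockStabilizer {n : ℕ} {I : Set ℕ} {σ : Equiv.Perm (Fin n)} :
    σ ∈ blockStabilizer n I ↔ ∀ i ∉ I, σ • initialSegment n (i + 1) = initialSegment n (i + 1) := by
  simp [blockStabilizer]

theorem le_iff_of_mem_blockStabilizer {n : ℕ} {I : Set ℕ} {σ : Equiv.Perm (Fin n)}
    (hσ : σ ∈ blockStabilizer n I) {i : ℕ} (hi : i ∉ I) (x : Fin n) :
    (σ x : ℕ) ≤ i ↔ (x : ℕ) ≤ i := by
  have := smul_mem_smul_finset_iff σ (b := x) (s := initialSegment n (i + 1))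
  rwa [mem_blockStabilizer.1 hσ i hi, Equiv.Perm.smul_def, mem_initialSegment,
    mem_initialSegment, Nat.lt_succ_iff, Nat.lt_succ_iff] at this

theorem WI_le_blockStabilizer (n : ℕ) (I : Set ℕ) : WI n I ≤ blockStabilizer n I := by
  refine Subgroup.closure_le _ |>.2 ?_
  rintro _ ⟨i, hi, hin, rfl⟩
  refine mem_blockStabilizer.2 fun k hk => swap_smul_finset_eq_self ?_
  have : k ≠ i := fun hki => hk (hki ▸ hi)
  simp only [mem_initialSegment]
  omega

theorem swap_mem_WI {n : ℕ} {I : Set ℕ} {i : ℕ} (hi : i ∈ I) (hin : i + 1 < n) :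
    Equiv.swap (⟨i, Nat.lt_of_succ_lt hin⟩ : Fin n) ⟨i + 1, hin⟩ ∈ WI n I :=
  Subgroup.subset_closure ⟨i, hi, hin, rfl⟩

theorem mem_orbit_WI_of_le {n : ℕ} {I : Set ℕ} {x y : Fin n} (hxy : x ≤ y)
    (hI : ∀ i : ℕ, (x : ℕ) ≤ i → i < y → i ∈ I) : y ∈ MulAction.orbit (WI n I) x := by
  obtain ⟨k, hk⟩ := Nat.exists_eq_add_of_le (Fin.le_def.1 hxy)
  induction k generalizing y with
  | zero => rw [Fin.ext (hk.trans x.val.add_zero)]; exact MulAction.mem_orbit_self x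
  | succ k ih =>
    have hkn : (x : ℕ) + k + 1 < n := hk ▸ y.isLt
    have hprev := ih (y := ⟨x + k, by omega⟩) (Fin.le_def.2 (by simp))
      (fun i hxi hik => hI i hxi (by simp only at hik; omega)) rfl
    have hstep := MulAction.mem_orbit_of_mem_orbit
      (⟨_, swap_mem_WI (hI (x + k) (by omega) (by omega)) hkn⟩ : WI n I) hprev
    convert hstep
    simp only [Subgroup.mk_smul, Equiv.Perm.smul_def, Equiv.swap_apply_left]
    exact Fin.ext hk

theorem blockStabilizer_le_WI (n : ℕ) (I : Set ℕ) : blockStabilizer n I ≤ WI n I := by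
  intro σ hσ
  unfold WI
  rw [mem_closure_isSwap (by rintro _ ⟨i, -, -, rfl⟩; exact ⟨_, _, by simp, rfl⟩)]
  refine ⟨Set.toFinite _, fun x => ?_⟩
  rcases le_total x (σ x) with hle | hle
  · refine mem_orbit_WI_of_le hle fun i hxi hiσ => ?_
    by_contra hi
    have := (le_iff_of_mem_blockStabilizer hσ hi x).2 hxi
    omega
  · refine MulAction.mem_orbit_symm.1 (mem_orbit_WI_of_le hle fun i hσi hix => ?_)
    by_contra hi
    have := (le_iff_of_mem_blockStabilizer hσ hi x).1 hσi
    omega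

theorem WI_eq_blockStabilizer (n : ℕ) (I : Set ℕ) : WI n I = blockStabilizer n I :=
  le_antisymm (WI_le_blockStabilizer n I) (blockStabilizer_le_WI n I)

/-- If `h` is strictly increasing, `w ∈ W_I` and `w(h) ≥ w'(h)` for the
partial-sum order, then `w' ∈ W_I`. -/
theorem mem_WI_of_partial_sums_le (n : ℕ) (h : Fin n → ℤ) (hmono : StrictMono h)
    (I : Set ℕ) (w w' : Equiv.Perm (Fin n)) (hw : w ∈ WI n I)
    (hge : ∀ a : ℕ, a ≤ n →
      psum (fun i => h (w'⁻¹ i)) a ≤ psum (fun i => h (w⁻¹ i)) a) :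
    w' ∈ WI n I := by
  rw [WI_eq_blockStabilizer] at hw ⊢
  rw [← inv_mem_iff, mem_blockStabilizer] at hw ⊢
  intro i hi
  rcases le_or_gt n (i + 1) with hn | hn
  · rw [initialSegment_eq_univ hn, smul_finset_univ]
  refine eq_of_sum_le_sum_of_isLowerSet hmono (isLowerSet_initialSegment n _)
    (card_smul_finset _ _) ?_
  have hsum := hge (i + 1) hn.le
  rwa [psum_eq_sum_inv_smul, psum_eq_sum_inv_smul, hw i hi] at hsum
end

section
/- Let h ∈ ℤ^n be strictly increasing, I ⊆ {1,…,n−1}, and let a_1 < a_2 < … < a_{r-1} be the elements of {1,…,n−1} \ I (the block boundaries of I). If w ∈ S_n satisfies Σ_{i=1}^{a_j} h_{w^{-1}(i)} = Σ_{i=1}^{a_j} h_i for every j ∈ {1,…,r−1}, then w belongs to the parabolic subgroup W_I of S_n, i.e. w preserves each block {a_{j-1}+1,…,a_j} (with a_0 = 0, a_r = n). -/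
open Finset

namespace MemWIAux

variable {n : ℕ}

/-- If `T` has the same cardinality as the initial segment `S` but `T ≠ S`, then the
sum of a strictly monotone `h` over `T` is strictly larger. -/
lemma sum_segment_lt (h : Fin n → ℤ) (hmono : StrictMono h) (a : ℕ) :
    ∀ k (T : Finset (Fin n)),
      (T \ Finset.univ.filter (fun j : Fin n => (j : ℕ) < a)).card = k →
      T.card = (Finset.univ.filter (fun j : Fin n => (j : ℕ) < a)).card →
      T ≠ Finset.univ.filter (fun j : Fin n => (j : ℕ) < a) →
      ∑ j ∈ Finset.univ.filter (fun j : Fin n => (j : ℕ) < a), h j < ∑ j ∈ T, h j := by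
  intro k
  induction k using Nat.strong_induction_on with
  | _ k IH =>
  intro T hk hcard hne
  set S := Finset.univ.filter (fun j : Fin n => (j : ℕ) < a) with hSdef
  have hTS : (T \ S).Nonempty := by
    rw [Finset.nonempty_iff_ne_empty]
    intro hemp
    have hsub : T ⊆ S := by
      intro x hx
      by_contra hxS
      exact absurd hemp (Finset.nonempty_iff_ne_empty.mp ⟨x, Finset.mem_sdiff.mpr ⟨hx, hxS⟩⟩)
    exact hne (Finset.eq_of_subset_of_card_le hsub (le_of_eq hcard.symm))
  have hST : (S \ T).Nonempty := by
    rw [← Finset.card_pos, Finset.card_sdiff_comm hcard.symm, Finset.card_pos]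
    exact hTS
  obtain ⟨t, ht⟩ := hTS
  obtain ⟨s, hs⟩ := hST
  rw [Finset.mem_sdiff] at ht hs
  have hsa : (s : ℕ) < a := by simpa [hSdef] using hs.1
  have hta : ¬ (t : ℕ) < a := by
    intro hta; exact ht.2 (by simp [hSdef, hta])
  have hst : h s < h t := hmono (by omega : (s : ℕ) < (t : ℕ))
  set T' : Finset (Fin n) := insert s (T.erase t) with hT'def
  have hsnot : s ∉ T.erase t := fun hmem => hs.2 (Finset.mem_of_mem_erase hmem)
  have hsumT' : ∑ j ∈ T', h j = ∑ j ∈ T, h j + (h s - h t) := by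
    rw [hT'def, Finset.sum_insert hsnot, Finset.sum_erase_eq_sub ht.1]
    ring
  have hlt : ∑ j ∈ T', h j < ∑ j ∈ T, h j := by
    rw [hsumT']; linarith
  have hcard' : T'.card = S.card := by
    rw [hT'def, Finset.card_insert_of_notMem hsnot, Finset.card_erase_of_mem ht.1, ← hcard]
    have : 0 < T.card := Finset.card_pos.mpr ⟨t, ht.1⟩
    omega
  have hsdiff : T' \ S = (T \ S).erase t := by
    rw [hT'def, Finset.insert_sdiff_of_mem _ hs.1]
    ext x
    simp only [Finset.mem_sdiff, Finset.mem_erase]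
    tauto
  have hklt : (T' \ S).card < k := by
    rw [hsdiff, Finset.card_erase_of_mem (Finset.mem_sdiff.mpr ht), hk]
    have : 0 < k := by
      rw [← hk, Finset.card_pos]; exact ⟨t, Finset.mem_sdiff.mpr ht⟩
    omega
  by_cases hTS' : T' = S
  · rw [← hTS']; exact hlt
  · exact lt_trans (IH _ hklt T' rfl hcard' hTS') hlt

/-- The set of inversions of a permutation. -/
def InvSet (w : Equiv.Perm (Fin n)) : Finset (Fin n × Fin n) :=
  Finset.univ.filter (fun p : Fin n × Fin n => p.1 < p.2 ∧ w p.2 < w p.1)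

lemma descent_exists (w : Equiv.Perm (Fin n)) (hpos : 0 < (InvSet w).card) :
    ∃ i : ℕ, ∃ hi : i + 1 < n,
      w (⟨i + 1, hi⟩ : Fin n) < w (⟨i, Nat.lt_of_succ_lt hi⟩ : Fin n) := by
  by_contra hcon
  push_neg at hcon
  obtain ⟨p, hp⟩ := Finset.card_pos.mp hpos
  rw [InvSet, Finset.mem_filter] at hp
  -- w is strictly monotone
  have hmono : StrictMono (w : Fin n → Fin n) := by
    cases n with
    | zero => exact fun a => absurd a.2 (by omega)
    | succ m =>
      rw [Fin.strictMono_iff_lt_succ]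
      intro i
      have h1 : (i : ℕ) + 1 < m + 1 := by omega
      have hle := hcon i h1
      have hne : w (⟨(i : ℕ), Nat.lt_of_succ_lt h1⟩ : Fin (m + 1)) ≠ w (⟨(i : ℕ) + 1, h1⟩) := by
        intro heq
        have := w.injective heq
        simp [Fin.ext_iff] at this
      have hcast : (Fin.castSucc i : Fin (m + 1)) = ⟨(i : ℕ), Nat.lt_of_succ_lt h1⟩ := rfl
      have hsucc : (i.succ : Fin (m + 1)) = ⟨(i : ℕ) + 1, h1⟩ := rfl
      rw [hcast, hsucc]
      exact lt_of_le_of_ne hle hne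
  exact absurd hp.2.2 (not_lt.mpr (le_of_lt (hmono hp.2.1)))

lemma swap_val {i : ℕ} (hi : i + 1 < n) (x : Fin n) :
    ((Equiv.swap (⟨i, Nat.lt_of_succ_lt hi⟩ : Fin n) (⟨i + 1, hi⟩ : Fin n) x : Fin n) : ℕ)
      = if (x : ℕ) = i then i + 1 else if (x : ℕ) = i + 1 then i else (x : ℕ) := by
  rcases eq_or_ne x (⟨i, Nat.lt_of_succ_lt hi⟩ : Fin n) with hx | hx
  · rw [hx, Equiv.swap_apply_left]; simp
  · rcases eq_or_ne x (⟨i + 1, hi⟩ : Fin n) with hx' | hx'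
    · rw [hx', Equiv.swap_apply_right]
      have : (i : ℕ) + 1 ≠ i := by omega
      simp
    · rw [Equiv.swap_apply_of_ne_of_ne hx hx']
      have h1 : (x : ℕ) ≠ i := fun h => hx (Fin.ext h)
      have h2 : (x : ℕ) ≠ i + 1 := fun h => hx' (Fin.ext h)
      simp [h1, h2]

lemma swap_pres {i j : ℕ} (hij : j ≠ i) (hi : i + 1 < n) (x : Fin n) :
    ((Equiv.swap (⟨i, Nat.lt_of_succ_lt hi⟩ : Fin n) (⟨i + 1, hi⟩ : Fin n) x : Fin n) : ℕ) < j + 1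
      ↔ (x : ℕ) < j + 1 := by
  rcases eq_or_ne x ⟨i, Nat.lt_of_succ_lt hi⟩ with hx | hx
  · rw [hx, Equiv.swap_apply_left]
    simp only [Fin.val_mk]
    omega
  · rcases eq_or_ne x ⟨i + 1, hi⟩ with hx' | hx'
    · rw [hx', Equiv.swap_apply_right]
      simp only [Fin.val_mk]
      omega
    · rw [Equiv.swap_apply_of_ne_of_ne hx hx']

/-- Main group-theoretic lemma: a permutation preserving all initial boundary
segments is in `W_I`. -/
lemma mem_of_pres (I : Set ℕ) :
    ∀ N (w : Equiv.Perm (Fin n)), (InvSet w).card = N →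
      (∀ j, j + 1 < n → j ∉ I → ∀ i : Fin n, (i : ℕ) < j + 1 ↔ ((w i : Fin n) : ℕ) < j + 1) →
      w ∈ WI n I := by
  intro N
  induction N using Nat.strong_induction_on with
  | _ N IH =>
  intro w hN hpres
  rcases Nat.eq_zero_or_pos N with h0 | hpos
  · -- no inversions: w = 1
    have hmono : StrictMono (w : Fin n → Fin n) := by
      intro a b hab
      rcases lt_trichotomy (w a) (w b) with hlt | heq | hgt
      · exact hlt
      · exact absurd (w.injective heq) (ne_of_lt hab)
      · exfalso
        have hmem : (a, b) ∈ InvSet w := by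
          rw [InvSet, Finset.mem_filter]
          exact ⟨Finset.mem_univ _, hab, hgt⟩
        have := Finset.card_pos.mpr ⟨(a, b), hmem⟩
        omega
    have hmono' : StrictMono ((w⁻¹ : Equiv.Perm (Fin n)) : Fin n → Fin n) := by
      intro a b hab
      rw [← hmono.lt_iff_lt]
      simpa using hab
    have hid : w = 1 := by
      haveI : WellFoundedLT (Fin n) := inferInstance
      ext i
      have h1 : i ≤ w i := hmono.le_apply
      have h2 : w i ≤ i := by
        have h2' : w i ≤ w⁻¹ (w i) := hmono'.le_apply
        simpa using h2'
      rw [le_antisymm h2 h1]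
      simp
    rw [hid]
    exact Subgroup.one_mem _
  · obtain ⟨i, hi, hdesc⟩ := descent_exists w (hN ▸ hpos)
    have hiI : i ∈ I := by
      by_contra hiI
      have h1 := (hpres i hi hiI ⟨i, Nat.lt_of_succ_lt hi⟩).mp (by simp)
      have h2 : ¬ ((w (⟨i + 1, hi⟩ : Fin n) : Fin n) : ℕ) < i + 1 := by
        intro h2
        exact absurd ((hpres i hi hiI ⟨i + 1, hi⟩).mpr h2) (by simp)
      rw [Fin.lt_def] at hdesc
      omega
    set s : Equiv.Perm (Fin n) :=
      Equiv.swap (⟨i, Nat.lt_of_succ_lt hi⟩ : Fin n) (⟨i + 1, hi⟩ : Fin n) with hsdef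
    set w' : Equiv.Perm (Fin n) := w * s with hw'def
    have hw'app : ∀ x, w' x = w (s x) := fun x => rfl
    -- inversion count decreases
    have hinj : Set.InjOn (fun p : Fin n × Fin n => (s p.1, s p.2)) (InvSet w') := by
      intro p _ q _ hpq
      simp only [Prod.ext_iff] at hpq ⊢
      exact ⟨s.injective hpq.1, s.injective hpq.2⟩
    have hxy : ((⟨i, Nat.lt_of_succ_lt hi⟩ : Fin n), (⟨i + 1, hi⟩ : Fin n)) ∈ InvSet w := by
      rw [InvSet, Finset.mem_filter]
      exact ⟨Finset.mem_univ _, by rw [Fin.lt_def]; simp, hdesc⟩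
    have hmaps : ∀ p ∈ InvSet w', (s p.1, s p.2) ∈
        (InvSet w).erase ((⟨i, Nat.lt_of_succ_lt hi⟩ : Fin n), (⟨i + 1, hi⟩ : Fin n)) := by
      rintro ⟨a, b⟩ hp
      rw [InvSet, Finset.mem_filter] at hp
      obtain ⟨-, hab, hwp⟩ := hp
      rw [hw'app, hw'app] at hwp
      have hab' : (a : ℕ) < (b : ℕ) := hab
      have hne : ¬((a : ℕ) = i ∧ (b : ℕ) = i + 1) := by
        rintro ⟨ha, hb⟩
        have ha' : a = (⟨i, Nat.lt_of_succ_lt hi⟩ : Fin n) := Fin.ext ha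
        have hb' : b = (⟨i + 1, hi⟩ : Fin n) := Fin.ext hb
        rw [ha', hb', hsdef, Equiv.swap_apply_left, Equiv.swap_apply_right] at hwp
        exact absurd hdesc (not_lt.mpr (le_of_lt hwp))
      have hsa := swap_val hi a
      have hsb := swap_val hi b
      rw [← hsdef] at hsa hsb
      have hslt : s a < s b := by
        rw [Fin.lt_def, hsa, hsb]
        split_ifs <;> omega
      refine Finset.mem_erase.mpr ⟨?_, ?_⟩
      · intro heqp
        have h1 : ((s a : Fin n) : ℕ) = i := by
          have := congrArg (fun p : Fin n × Fin n => ((p.1 : Fin n) : ℕ)) heqp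
          simpa using this
        have h2 : ((s b : Fin n) : ℕ) = i + 1 := by
          have := congrArg (fun p : Fin n × Fin n => ((p.2 : Fin n) : ℕ)) heqp
          simpa using this
        rw [hsa] at h1
        rw [hsb] at h2
        split_ifs at h1 h2 <;> omega
      · rw [InvSet, Finset.mem_filter]
        exact ⟨Finset.mem_univ _, hslt, hwp⟩
    have hcard_lt : (InvSet w').card < N := by
      have h1 : (InvSet w').card ≤ ((InvSet w).erase _).card :=
        Finset.card_le_card_of_injOn _ hmaps hinj
      have h2 : ((InvSet w).erase ((⟨i, Nat.lt_of_succ_lt hi⟩ : Fin n), (⟨i + 1, hi⟩ : Fin n))).card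
          = (InvSet w).card - 1 := Finset.card_erase_of_mem hxy
      have h3 : 0 < (InvSet w).card := Finset.card_pos.mpr ⟨_, hxy⟩
      omega
    have hpres' : ∀ j, j + 1 < n → j ∉ I → ∀ x : Fin n,
        (x : ℕ) < j + 1 ↔ ((w' x : Fin n) : ℕ) < j + 1 := by
      intro j hj hjI x
      have hji : j ≠ i := fun h => hjI (h ▸ hiI)
      rw [hw'app]
      rw [← hpres j hj hjI (s x)]
      rw [hsdef]
      exact (swap_pres hji hi x).symm
    have hw' : w' ∈ WI n I := IH _ hcard_lt w' rfl hpres'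
    have hs : s ∈ WI n I := Subgroup.subset_closure ⟨i, hiI, hi, hsdef⟩
    have : w = w' * s := by
      rw [hw'def, mul_assoc, hsdef]
      simp
    rw [this]
    exact Subgroup.mul_mem _ hw' hs

end MemWIAux

/-- If `h` is strictly increasing and the partial sums of `w(h)` agree with those
of `h` at every block boundary of `I`, then `w ∈ W_I`. -/
theorem mem_WI_of_boundary_sums_eq (n : ℕ) (h : Fin n → ℤ) (hmono : StrictMono h)
    (I : Set ℕ) (w : Equiv.Perm (Fin n))
    (heq : ∀ j : ℕ, j + 1 < n → j ∉ I →
      psum (fun i => h (w⁻¹ i)) (j + 1) = psum h (j + 1)) :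
    w ∈ WI n I := by
  apply MemWIAux.mem_of_pres I (MemWIAux.InvSet w).card w rfl
  intro j hj hjI x
  set S : Finset (Fin n) := Finset.univ.filter (fun i : Fin n => (i : ℕ) < j + 1) with hSdef
  set v : Equiv.Perm (Fin n) := w⁻¹ with hvdef
  set T : Finset (Fin n) := S.image v with hTdef
  have hcard : T.card = S.card := Finset.card_image_of_injective _ v.injective
  have hsum : ∑ i ∈ T, h i = ∑ i ∈ S, h i := by
    rw [hTdef, Finset.sum_image (fun a _ b _ hab => v.injective hab)]
    exact heq j hj hjI
  have hTeqS : T = S := by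
    by_contra hne
    exact absurd hsum (ne_of_gt (MemWIAux.sum_segment_lt h hmono (j + 1) _ T rfl hcard hne))
  have hvw : ∀ y : Fin n, v (w y) = y := by
    intro y; rw [hvdef]; simp
  have hwv : ∀ y : Fin n, w (v y) = y := by
    intro y; rw [hvdef]; simp
  have hmem : ∀ y : Fin n, y ∈ T ↔ w y ∈ S := by
    intro y
    rw [hTdef]
    constructor
    · intro hy
      obtain ⟨z, hz, hzy⟩ := Finset.mem_image.mp hy
      have : w y = z := by rw [← hzy, hwv]
      rw [this]; exact hz
    · intro hy
      exact Finset.mem_image.mpr ⟨w y, hy, hvw y⟩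
  constructor
  · intro hx
    have : x ∈ T := hTeqS ▸ (by simpa [hSdef] using hx)
    have := (hmem x).mp this
    simpa [hSdef] using this
  · intro hx
    have : x ∈ T := (hmem x).mpr (by simpa [hSdef] using hx)
    rw [hTeqS] at this
    simpa [hSdef] using this
end

section
/- Let n ≥ 2, λ = (k_1,…,k_n) ∈ ℤ^n dominant (k_i ≥ k_{i+1} for all i), and let {1,…,n} = S_1 ⊔ … ⊔ S_s be a partition into consecutive blocks with block boundaries a_j = |S_1|+…+|S_j|. Let w ∈ S_n with w ≠ 1 such that the weight w·λ, defined by (w·λ)_i = k_{w^{-1}(i)} − (w^{-1}(i) − i), satisfies (w·λ)_i ≥ (w·λ)_{i+1} whenever i and i+1 lie in the same block. Then there exists a block boundary a ∈ {a_1,…,a_s} with Σ_{i=1}^{a} ((w·λ)_i − λ_i) ≤ k_{a+1} − k_a − 1. -/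
open Finset

/-- Coordinates of the dot action: `(w·λ)_i = k_{w⁻¹(i)} − (w⁻¹(i) − i)`. -/
def dotAct {n : ℕ} (w : Equiv.Perm (Fin n)) (k : Fin n → ℤ) : Fin n → ℤ :=
  fun i => k (w⁻¹ i) - (((w⁻¹ i : Fin n) : ℕ) : ℤ) + ((i : ℕ) : ℤ)

lemma aux_strictMono_le {c : ℕ} {g : Fin c → ℕ} (hg : StrictMono g) :
    ∀ v (hv : v < c), v ≤ g ⟨v, hv⟩ := by
  intro v
  induction v with
  | zero => intro _; exact Nat.zero_le _
  | succ t IH =>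
    intro hv
    have h1 : g ⟨t, Nat.lt_of_succ_lt hv⟩ < g ⟨t + 1, hv⟩ := hg (by simp [Fin.lt_def])
    have h2 := IH (Nat.lt_of_succ_lt hv)
    omega

lemma filter_lt_eq_image {n a : ℕ} (ha : a ≤ n) :
    Finset.univ.filter (fun j : Fin n => (j : ℕ) < a)
      = Finset.image (Fin.castLE ha) Finset.univ := by
  ext x
  simp only [Finset.mem_filter, Finset.mem_univ, true_and, Finset.mem_image]
  constructor
  · intro hx
    exact ⟨⟨(x : ℕ), hx⟩, rfl⟩
  · rintro ⟨i, -, rfl⟩; exact i.2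

lemma card_filter_lt {n a : ℕ} (ha : a ≤ n) :
    (Finset.univ.filter (fun j : Fin n => (j : ℕ) < a)).card = a := by
  rw [filter_lt_eq_image ha,
    Finset.card_image_of_injective _ (Fin.castLE_injective ha)]
  simp

/-- Sum of `f` over any finset is at most the sum over the initial segment of
the same cardinality, for antitone `f`. -/
lemma sum_le_initial {n : ℕ} (f : Fin n → ℤ)
    (hf : ∀ i j : Fin n, i ≤ j → f j ≤ f i) (T : Finset (Fin n)) :
    ∑ x ∈ T, f x ≤ ∑ x ∈ Finset.univ.filter (fun j : Fin n => (j : ℕ) < T.card), f x := by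
  have hc : T.card ≤ n := by
    have := Finset.card_le_univ T
    simpa using this
  let e := T.orderIsoOfFin rfl
  have hm : StrictMono (fun i : Fin T.card => (((e i : Fin n)) : ℕ)) := by
    intro i j hij
    have h1 : (e i : { x // x ∈ T }) < e j := e.strictMono hij
    exact h1
  have hle : ∀ i : Fin T.card, (i : ℕ) ≤ ((e i : Fin n) : ℕ) := by
    intro i
    have := aux_strictMono_le hm i.1 i.2
    simpa using this
  calc ∑ x ∈ T, f x = ∑ x : {x // x ∈ T}, f x := (Finset.sum_coe_sort T f).symm
    _ = ∑ i : Fin T.card, f (e i) := (Equiv.sum_comp e.toEquiv (fun x : {x // x ∈ T} => f x)).symm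
    _ ≤ ∑ i : Fin T.card, f (Fin.castLE hc i) := by
        apply Finset.sum_le_sum
        intro i _
        apply hf
        rw [Fin.le_def]
        simpa using hle i
    _ = ∑ x ∈ Finset.univ.filter (fun j : Fin n => (j : ℕ) < T.card), f x := by
        rw [filter_lt_eq_image hc,
          Finset.sum_image (fun x _ y _ h => Fin.castLE_injective hc h)]

lemma psum_succ {n : ℕ} (x : Fin n → ℤ) (a : ℕ) (ha : a < n) :
    psum x (a + 1) = psum x a + x ⟨a, ha⟩ := by
  unfold psum
  have hset : Finset.univ.filter (fun j : Fin n => (j : ℕ) < a + 1)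
      = insert ⟨a, ha⟩ (Finset.univ.filter (fun j : Fin n => (j : ℕ) < a)) := by
    ext y
    simp only [Finset.mem_filter, Finset.mem_univ, true_and, Finset.mem_insert]
    constructor
    · intro hy
      rcases Nat.lt_succ_iff_lt_or_eq.mp hy with h | h
      · exact Or.inr h
      · exact Or.inl (Fin.ext h)
    · rintro (rfl | h)
      · simp
      · omega
  rw [hset, Finset.sum_insert (by simp)]
  ring

lemma preserve_of_maps {n : ℕ} (σ : Equiv.Perm (Fin n)) (a : ℕ)
    (h : ∀ i : Fin n, (i : ℕ) < a → ((σ i : Fin n) : ℕ) < a) :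
    ∀ i : Fin n, ((σ i : Fin n) : ℕ) < a → (i : ℕ) < a := by
  intro i hi
  set S := Finset.univ.filter (fun j : Fin n => (j : ℕ) < a) with hS
  have hsub : S.image σ ⊆ S := by
    intro x hx
    rw [Finset.mem_image] at hx
    obtain ⟨y, hy, rfl⟩ := hx
    rw [hS, Finset.mem_filter] at hy ⊢
    exact ⟨Finset.mem_univ _, h y hy.2⟩
  have heq : S.image σ = S := Finset.eq_of_subset_of_card_le hsub
    (le_of_eq (Finset.card_image_of_injective _ σ.injective).symm)
  have hmem : σ i ∈ S := by rw [hS, Finset.mem_filter]; exact ⟨Finset.mem_univ _, hi⟩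
  rw [← heq, Finset.mem_image] at hmem
  obtain ⟨y, hy, hyi⟩ := hmem
  have : y = i := σ.injective hyi
  subst this
  rw [hS, Finset.mem_filter] at hy
  exact hy.2

/-- For `λ` dominant, `w ≠ 1` with `w·λ` `P`-dominant (for the block structure
given by `I`: positions `j ∈ I` mean indices `j` and `j+1` are in the same
block), there is a block boundary `a = j+1` with
`Σ_{i≤a} ((w·λ)_i − λ_i) ≤ k_{a+1} − k_a − 1`. -/
theorem exists_boundary_bound (n : ℕ) (hn : 2 ≤ n) (k : Fin n → ℤ)
    (hdom : ∀ i j : Fin n, i ≤ j → k j ≤ k i)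
    (I : Set ℕ) (w : Equiv.Perm (Fin n)) (hw : w ≠ 1)
    (hPdom : ∀ j : ℕ, ∀ hj : j + 1 < n, j ∈ I →
      dotAct w k ⟨j + 1, hj⟩ ≤ dotAct w k ⟨j, Nat.lt_of_succ_lt hj⟩) :
    ∃ j : ℕ, ∃ hj : j + 1 < n, j ∉ I ∧
      psum (fun i => dotAct w k i - k i) (j + 1)
        ≤ k ⟨j + 1, hj⟩ - k ⟨j, Nat.lt_of_succ_lt hj⟩ - 1 := by
  classical
  set f : Fin n → ℤ := fun i => k i - ((i : ℕ) : ℤ) with hf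
  have hfa : ∀ i j : Fin n, i ≤ j → f j ≤ f i := by
    intro i j hij
    have h1 := hdom i j hij
    have h2 : ((i : ℕ) : ℤ) ≤ ((j : ℕ) : ℤ) := by exact_mod_cast (Fin.le_def.mp hij)
    simp only [hf]
    linarith
  -- strict antitonicity on values
  have hfstrict : ∀ i j : Fin n, (i : ℕ) < (j : ℕ) → f j < f i := by
    intro i j hij
    have h1 := hdom i j (by rw [Fin.le_def]; omega)
    have h2 : ((i : ℕ) : ℤ) + 1 ≤ ((j : ℕ) : ℤ) := by exact_mod_cast hij
    simp only [hf]
    linarith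
  by_cases hcase : ∃ j : ℕ, ∃ hjn : j + 1 < n, j ∉ I ∧
      ∃ i : Fin n, (i : ℕ) < j + 1 ∧ j + 1 ≤ ((w⁻¹ i : Fin n) : ℕ)
  · obtain ⟨j, hjn, hjI, i₀, hi₀lt, hi₀ge⟩ := hcase
    refine ⟨j, hjn, hjI, ?_⟩
    set S : Finset (Fin n) := Finset.univ.filter (fun x : Fin n => (x : ℕ) < j + 1) with hSdef
    have hjn' : j < n := Nat.lt_of_succ_lt hjn
    have hja : j + 1 ≤ n := le_of_lt hjn
    -- rewrite psum
    have hps : psum (fun i => dotAct w k i - k i) (j + 1)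
        = (∑ x ∈ S, f (w⁻¹ x)) - ∑ x ∈ S, f x := by
      unfold psum
      rw [← Finset.sum_sub_distrib]
      apply Finset.sum_congr rfl
      intro x _
      simp only [dotAct, hf]
      ring
    rw [hps]
    -- image of S under w⁻¹
    set T : Finset (Fin n) := S.image (fun x => w⁻¹ x) with hTdef
    have hinj : Function.Injective (fun x : Fin n => w⁻¹ x) := (w⁻¹).injective
    have hsumT : ∑ x ∈ S, f (w⁻¹ x) = ∑ y ∈ T, f y := by
      rw [hTdef, Finset.sum_image (fun x _ y _ h => hinj h)]
    have hScard : S.card = j + 1 := card_filter_lt hja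
    have hTcard : T.card = j + 1 := by
      rw [hTdef, Finset.card_image_of_injective _ hinj, hScard]
    set m : Fin n := w⁻¹ i₀ with hm
    have hmT : m ∈ T := by
      rw [hTdef, Finset.mem_image]
      exact ⟨i₀, by rw [hSdef, Finset.mem_filter]; exact ⟨Finset.mem_univ _, hi₀lt⟩, rfl⟩
    have hsplit : ∑ y ∈ T.erase m, f y + f m = ∑ y ∈ T, f y :=
      Finset.sum_erase_add T f hmT
    have hecard : (T.erase m).card = j := by
      rw [Finset.card_erase_of_mem hmT, hTcard]
      omega
    have hbound1 : ∑ y ∈ T.erase m, f y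
        ≤ ∑ x ∈ Finset.univ.filter (fun x : Fin n => (x : ℕ) < j), f x := by
      have := sum_le_initial f hfa (T.erase m)
      rwa [hecard] at this
    have hbound2 : f m ≤ f ⟨j + 1, hjn⟩ := by
      apply hfa
      rw [Fin.le_def]
      simpa using hi₀ge
    have hSsplit : ∑ x ∈ S, f x
        = (∑ x ∈ Finset.univ.filter (fun x : Fin n => (x : ℕ) < j), f x) + f ⟨j, hjn'⟩ := by
      have := psum_succ f j hjn'
      unfold psum at this
      rw [hSdef]
      exact this
    have hfinal : f ⟨j + 1, hjn⟩ - f ⟨j, hjn'⟩ = k ⟨j + 1, hjn⟩ - k ⟨j, hjn'⟩ - 1 := by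
      simp only [hf]
      push_cast
      ring
    have : k ⟨j, Nat.lt_of_succ_lt hjn⟩ = k ⟨j, hjn'⟩ := rfl
    rw [this, ← hfinal, hsumT, ← hsplit, hSsplit]
    linarith
  · -- no such boundary: w must be the identity
    push_neg at hcase
    have hge : ∀ t : ℕ, ∀ ht : t < n, t ≤ ((w⁻¹ ⟨t, ht⟩ : Fin n) : ℕ) := by
      intro t
      induction t with
      | zero => intro _; exact Nat.zero_le _
      | succ t IH =>
        intro ht
        by_cases htI : t ∈ I
        · have hd := hPdom t ht htI
          set x : Fin n := w⁻¹ ⟨t, Nat.lt_of_succ_lt ht⟩ with hx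
          set y : Fin n := w⁻¹ ⟨t + 1, ht⟩ with hy
          have hxy : (x : ℕ) < (y : ℕ) := by
            by_contra hcon
            push_neg at hcon
            have hne : y ≠ x := by
              intro h
              have := (w⁻¹).injective (hy.symm.trans (h.trans hx))
              simp at this
            have hlt : (y : ℕ) < (x : ℕ) := by
              rcases lt_or_eq_of_le hcon with h | h
              · exact h
              · exact absurd (Fin.ext h) hne
            have hk : k x ≤ k y := hdom y x (by rw [Fin.le_def]; omega)
            simp only [dotAct] at hd
            rw [← hx, ← hy] at hd
            have hc1 : ((y : ℕ) : ℤ) < ((x : ℕ) : ℤ) := by exact_mod_cast hlt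
            push_cast at hd
            linarith
          have := IH (Nat.lt_of_succ_lt ht)
          rw [← hx] at this
          omega
        · by_contra hcon
          push_neg at hcon
          have hmap := hcase t ht htI
          have := preserve_of_maps w⁻¹ (t + 1) hmap ⟨t + 1, ht⟩ (by omega)
          simp at this
    have hsum : ∑ i : Fin n, ((w⁻¹ i : Fin n) : ℕ) = ∑ i : Fin n, (i : ℕ) :=
      Equiv.sum_comp (w⁻¹ : Equiv.Perm (Fin n)) (fun i : Fin n => (i : ℕ))
    have hle : ∀ i ∈ (Finset.univ : Finset (Fin n)), (i : ℕ) ≤ ((w⁻¹ i : Fin n) : ℕ) := by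
      intro i _
      have := hge i.1 i.2
      simpa using this
    have heqall := (Finset.sum_eq_sum_iff_of_le hle).mp hsum.symm
    have hwinv : w⁻¹ = 1 := by
      apply Equiv.ext
      intro i
      simp only [Equiv.Perm.one_apply]
      exact Fin.ext ((heqall i (Finset.mem_univ i)).symm)
    exact absurd (inv_eq_one.mp hwinv) hw
end

section
/- Let λ = (k_1,…,k_n) ∈ ℤ^n be dominant, and fix a partition of {1,…,n} into consecutive blocks. Let w ∈ S_n with w ≠ 1 such that w·λ (dot action, (w·λ)_i = k_{w^{-1}(i)} − (w^{-1}(i) − i)) is P-dominant for this block partition. Let i_0 be the smallest index with w^{-1}(i_0) ≠ i_0 (so i_0 < w^{-1}(i_0)). Then for every index i ≥ i_0 lying in the same block as i_0, one has w^{-1}(i) ≥ w^{-1}(i_0) + (i − i_0). -/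
/-! Within a block, `P`-dominance of `w·λ` together with dominance of `λ` forces `w⁻¹` to be
strictly increasing on consecutive indices, and a strictly increasing sequence of natural numbers
grows by at least one per step. -/

/- If `w⁻¹` reversed the order of `i < j`, then `dotAct w k j > dotAct w k i`: the `k`-term does
not decrease and the two index terms strictly increase. -/
theorem inv_apply_lt_inv_apply_of_dotAct_le {n : ℕ} {k : Fin n → ℤ} (hdom : Antitone k)
    (w : Equiv.Perm (Fin n)) {i j : Fin n} (hij : i < j) (h : dotAct w k j ≤ dotAct w k i) :
    w⁻¹ i < w⁻¹ j := by
  by_contra! hrev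
  have hne : w⁻¹ j ≠ w⁻¹ i := fun he => hij.ne' (w⁻¹.injective he)
  have hlt : ((w⁻¹ j : Fin n) : ℕ) < w⁻¹ i := lt_of_le_of_ne hrev (Fin.val_ne_of_ne hne)
  have hk : k (w⁻¹ i) ≤ k (w⁻¹ j) := hdom hrev
  have hij' : (i : ℕ) < j := hij
  simp only [dotAct] at h
  omega

theorem Fin.apply_add_sub_le_of_lt_succ {n : ℕ} (f : Fin n → ℕ) {i₀ i : Fin n} (hle : i₀ ≤ i)
    (hstep : ∀ (j : ℕ) (hj : j + 1 < n), (i₀ : ℕ) ≤ j → j < i →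
      f ⟨j, Nat.lt_of_succ_lt hj⟩ < f ⟨j + 1, hj⟩) :
    f i₀ + (i - i₀) ≤ f i := by
  obtain ⟨i, hi⟩ := i
  change (i₀ : ℕ) ≤ i at hle
  induction i, hle using Nat.le_induction with
  | base => simp
  | succ m hm ih =>
    have hprev := ih (by omega) fun j hj h₀ hjm => hstep j hj h₀ (by simp at hjm ⊢; omega)
    have hlast := hstep m hi hm (by simp)
    simp only at hprev ⊢
    omega

theorem dot_dominant_displacement_general (n : ℕ) (k : Fin n → ℤ)
    (hdom : ∀ i j : Fin n, i ≤ j → k j ≤ k i)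
    (I : Set ℕ) (w : Equiv.Perm (Fin n))
    (hPdom : ∀ j : ℕ, ∀ hj : j + 1 < n, j ∈ I →
      dotAct w k ⟨j + 1, hj⟩ ≤ dotAct w k ⟨j, Nat.lt_of_succ_lt hj⟩)
    (i0 : Fin n) :
    ∀ i : Fin n, i0 ≤ i → (∀ t : ℕ, (i0 : ℕ) ≤ t → t < (i : ℕ) → t ∈ I) →
      ((w⁻¹ i0 : Fin n) : ℕ) + ((i : ℕ) - (i0 : ℕ)) ≤ ((w⁻¹ i : Fin n) : ℕ) := by
  intro i hle hblock
  refine Fin.apply_add_sub_le_of_lt_succ (fun j => (w⁻¹ j : ℕ)) hle fun j hj h₀ hji => ?_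
  exact inv_apply_lt_inv_apply_of_dotAct_le (fun a b => hdom a b) w (Fin.mk_lt_mk.2 j.lt_succ_self)
    (hPdom j hj (hblock j h₀ hji))

/-- For `λ` dominant, `w ≠ 1` with `w·λ` `P`-dominant, letting `i₀` be the
smallest index moved by `w⁻¹`, every `i ≥ i₀` in the same block as `i₀`
satisfies `w⁻¹(i) ≥ w⁻¹(i₀) + (i − i₀)`. -/
theorem dot_dominant_displacement (n : ℕ) (k : Fin n → ℤ)
    (hdom : ∀ i j : Fin n, i ≤ j → k j ≤ k i)
    (I : Set ℕ) (w : Equiv.Perm (Fin n)) (hw : w ≠ 1)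
    (hPdom : ∀ j : ℕ, ∀ hj : j + 1 < n, j ∈ I →
      dotAct w k ⟨j + 1, hj⟩ ≤ dotAct w k ⟨j, Nat.lt_of_succ_lt hj⟩)
    (i0 : Fin n) (hi0 : w⁻¹ i0 ≠ i0) (hmin : ∀ i : Fin n, i < i0 → w⁻¹ i = i) :
    ∀ i : Fin n, i0 ≤ i → (∀ t : ℕ, (i0 : ℕ) ≤ t → t < (i : ℕ) → t ∈ I) →
      ((w⁻¹ i0 : Fin n) : ℕ) + ((i : ℕ) - (i0 : ℕ)) ≤ ((w⁻¹ i : Fin n) : ℕ) :=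
  dot_dominant_displacement_general n k hdom I w hPdom i0
end

section
/- Let λ = (k_1,…,k_n) ∈ ℤ^n be dominant, fix a partition of {1,…,n} into consecutive blocks, and let w ∈ S_n, w ≠ 1, be such that w·λ is P-dominant for this partition. Let i_0 be the smallest index with w^{-1}(i_0) ≠ i_0. Then for every index i ≥ i_0 in the same block as i_0, one has (w·λ)_i < k_i, i.e. the i-th coordinate of w·λ is strictly smaller than the i-th coordinate of λ. -/
lemma dot_coord_aux (n : ℕ) (k : Fin n → ℤ)
    (hdom : ∀ i j : Fin n, i ≤ j → k j ≤ k i)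
    (I : Set ℕ) (w : Equiv.Perm (Fin n))
    (hPdom : ∀ j : ℕ, ∀ hj : j + 1 < n, j ∈ I →
      dotAct w k ⟨j + 1, hj⟩ ≤ dotAct w k ⟨j, Nat.lt_of_succ_lt hj⟩)
    (i0 : Fin n) (hi0 : w⁻¹ i0 ≠ i0) (hmin : ∀ i : Fin n, i < i0 → w⁻¹ i = i) :
    ∀ m : ℕ, (i0 : ℕ) ≤ m → ∀ hn : m < n,
      (∀ t : ℕ, (i0 : ℕ) ≤ t → t < m → t ∈ I) →
      ∃ M : Fin n, m < (M : ℕ) ∧ ((w M : Fin n) : ℕ) ≤ m ∧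
        dotAct w k ⟨m, hn⟩ ≤ k M - ((M : ℕ) : ℤ) + (m : ℤ) := by
  intro m hm
  induction m, hm using Nat.le_induction with
  | base =>
    intro hn _
    have hieq : (⟨(i0 : ℕ), hn⟩ : Fin n) = i0 := Fin.ext rfl
    refine ⟨w⁻¹ i0, ?_, ?_, ?_⟩
    · -- i0 < w⁻¹ i0
      rcases lt_trichotomy ((w⁻¹ i0 : Fin n) : ℕ) ((i0 : ℕ)) with h | h | h
      · exfalso
        have hfix : w⁻¹ (w⁻¹ i0) = w⁻¹ i0 := hmin _ h
        exact hi0 ((Equiv.injective w⁻¹) (by rw [hfix]))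
      · exact absurd (Fin.ext h) hi0
      · exact h
    · simp
    · rw [hieq]; simp [dotAct]
  | succ m hm ih =>
    intro hn hI
    have hn' : m < n := by omega
    obtain ⟨M, hM1, hM2, hM3⟩ := ih hn' (fun t ht1 ht2 => hI t ht1 (by omega))
    have hmem : m ∈ I := hI _ hm (by omega)
    set i : Fin n := ⟨m, hn'⟩ with hidef
    set i' : Fin n := ⟨m + 1, hn⟩ with hi'def
    have hP : dotAct w k i' ≤ dotAct w k i := hPdom m hn hmem
    set b : Fin n := w⁻¹ i' with hbdef
    have hvi' : (i' : ℕ) = m + 1 := rfl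
    have hwb : w b = i' := by simp [hbdef]
    have hbne : (b : ℕ) ≠ (M : ℕ) := by
      intro h
      have hbM : b = M := Fin.ext h
      have h2 : ((w M : Fin n) : ℕ) = m + 1 := by rw [← hbM, hwb]
      omega
    have hdotb : dotAct w k i' = k b - ((b : ℕ) : ℤ) + ((i' : ℕ) : ℤ) := rfl
    rcases lt_or_gt_of_ne hbne with hb | hb
    · -- b < M
      by_cases hMeq : (M : ℕ) = m + 1
      · exfalso
        have hkb : k i' ≤ k b := hdom b i' (by rw [Fin.le_def]; omega)
        have hMi' : M = i' := Fin.ext (by omega)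
        rw [hMi'] at hM3
        omega
      · exact ⟨M, by omega, by omega, by omega⟩
    · -- b > M : take M' = b
      refine ⟨b, by omega, ?_, by omega⟩
      rw [hwb]

/-- For `λ` dominant, `w ≠ 1` with `w·λ` `P`-dominant, letting `i₀` be the
smallest index moved by `w⁻¹`, every `i ≥ i₀` in the same block as `i₀`
satisfies `(w·λ)_i < k_i`. -/
theorem dot_coord_lt (n : ℕ) (k : Fin n → ℤ)
    (hdom : ∀ i j : Fin n, i ≤ j → k j ≤ k i)
    (I : Set ℕ) (w : Equiv.Perm (Fin n)) (hw : w ≠ 1)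
    (hPdom : ∀ j : ℕ, ∀ hj : j + 1 < n, j ∈ I →
      dotAct w k ⟨j + 1, hj⟩ ≤ dotAct w k ⟨j, Nat.lt_of_succ_lt hj⟩)
    (i0 : Fin n) (hi0 : w⁻¹ i0 ≠ i0) (hmin : ∀ i : Fin n, i < i0 → w⁻¹ i = i) :
    ∀ i : Fin n, i0 ≤ i → (∀ t : ℕ, (i0 : ℕ) ≤ t → t < (i : ℕ) → t ∈ I) →
      dotAct w k i < k i := by
  intro i hle hI
  obtain ⟨M, hM1, _, hM3⟩ := dot_coord_aux n k hdom I w hPdom i0 hi0 hmin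
    (i : ℕ) hle i.isLt hI
  have hieq : (⟨(i : ℕ), i.isLt⟩ : Fin n) = i := Fin.ext rfl
  rw [hieq] at hM3
  have hkM : k M ≤ k i := hdom i M (by rw [Fin.le_def]; omega)
  omega
end
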